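/- arXiv:2204.01579 — 14 statements merged into one kernel-verified Lean document; each statement's English description precedes it below -/
import Mathlib

section
/- Suppose there exists a positive integer M such that for all integers m > M we have p_{m+1} − p_m < 2√(p_{m+1}), i.e. the open real interval (p_{m+1} − 2√(p_{m+1}), p_{m+1}) contains a prime (namely p_m). Then for every real number x > p_{M+1}, the open interval (x − 2√x, x) contains a prime number. -/
lemma sqrt_mono_aux (a b : ℝ) (ha : 1 ≤ a) (hab : a ≤ b) :
    a - 2 * Real.sqrt a ≤ b - 2 * Real.sqrt b := by
  have ha0 : (0:ℝ) ≤ a := by linarith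
  have hb0 : (0:ℝ) ≤ b := by linarith
  have hsa : Real.sqrt a ^ 2 = a := Real.sq_sqrt ha0
  have hsb : Real.sqrt b ^ 2 = b := Real.sq_sqrt hb0
  have h1 : 1 ≤ Real.sqrt a := by
    rw [show (1:ℝ) = Real.sqrt 1 by simp]
    exact Real.sqrt_le_sqrt ha
  have h2 : Real.sqrt a ≤ Real.sqrt b := Real.sqrt_le_sqrt hab
  nlinarith [h1, h2, hsa, hsb]

theorem stmt_2 (M : ℕ) (hM : 0 < M)
    (h : ∀ m : ℕ, m > M →
      (Nat.nth Nat.Prime (m + 1) : ℝ) - Nat.nth Nat.Prime m <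
        2 * Real.sqrt (Nat.nth Nat.Prime (m + 1))) :
    ∀ x : ℝ, x > (Nat.nth Nat.Prime (M + 1) : ℝ) →
      ∃ q : ℕ, q.Prime ∧ x - 2 * Real.sqrt x < q ∧ (q : ℝ) < x := by
  intro x hx
  have hinf := Nat.infinite_setOf_prime
  -- x ≥ 2
  have hpM : 2 ≤ Nat.nth Nat.Prime (M + 1) :=
    (Nat.prime_nth_prime (M + 1)).two_le
  have hx2 : (2:ℝ) < x := lt_of_le_of_lt (by exact_mod_cast hpM) hx
  -- find n with x ≤ p_n
  obtain ⟨P, hPle, hPprime⟩ := Nat.exists_infinite_primes (Nat.ceil x)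
  have hPnth : Nat.nth Nat.Prime (Nat.count Nat.Prime P) = P := Nat.nth_count hPprime
  have hexists : ∃ n, x ≤ (Nat.nth Nat.Prime n : ℝ) := by
    refine ⟨Nat.count Nat.Prime P, ?_⟩
    rw [hPnth]
    calc x ≤ (Nat.ceil x : ℝ) := Nat.le_ceil x
      _ ≤ P := by exact_mod_cast hPle
  classical
  let n := Nat.find hexists
  have hn : x ≤ (Nat.nth Nat.Prime n : ℝ) := Nat.find_spec hexists
  -- n > M + 1
  have hnM : M + 1 < n := by
    by_contra hc
    push_neg at hc
    have : (Nat.nth Nat.Prime n : ℝ) ≤ Nat.nth Nat.Prime (M + 1) := by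
      exact_mod_cast Nat.nth_le_nth (p := Nat.Prime) hinf |>.mpr hc
    linarith
  have hn0 : 0 < n := by omega
  obtain ⟨m, hm⟩ : ∃ m, n = m + 1 := ⟨n - 1, by omega⟩
  rw [hm] at hn
  have hmM : m > M := by omega
  have hlt : (Nat.nth Nat.Prime m : ℝ) < x := by
    by_contra hc
    push_neg at hc
    have := Nat.find_min hexists (m := m) (show m < n by omega)
    exact this hc
  refine ⟨Nat.nth Nat.Prime m, Nat.prime_nth_prime m, ?_, hlt⟩
  have hmono : x - 2 * Real.sqrt x ≤
      (Nat.nth Nat.Prime (m + 1) : ℝ) - 2 * Real.sqrt (Nat.nth Nat.Prime (m + 1)) :=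
    sqrt_mono_aux x _ (by linarith) hn
  have := h m hmM
  linarith
end

section
/- Suppose there exists a positive integer M such that for every integer m > M the consecutive primes satisfy √(p_{m+1}) − √(p_m) < 1 (Andrica-type inequality). Then for every integer n > p_M there exists a prime p with n^2 < p < (n+1)^2. -/
theorem stmt_3 (M : ℕ) (hM : 0 < M)
    (h : ∀ m : ℕ, m > M →
      Real.sqrt (Nat.nth Nat.Prime (m + 1)) - Real.sqrt (Nat.nth Nat.Prime m) < 1) :
    ∀ n : ℕ, n > Nat.nth Nat.Prime M →
      ∃ p : ℕ, p.Prime ∧ n ^ 2 < p ∧ p < (n + 1) ^ 2 := by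
  intro n hn
  have hinf : (setOf Nat.Prime).Infinite := Nat.infinite_setOf_prime
  have hMp : 2 ≤ Nat.nth Nat.Prime M := (Nat.prime_nth_prime M).two_le
  have hn3 : 3 ≤ n := by omega
  obtain ⟨q, hq, hq1, hq2⟩ := Nat.exists_prime_lt_and_le_two_mul (Nat.nth Nat.Prime M) (by omega)
  have hqn : q ≤ n ^ 2 := by nlinarith
  set c := Nat.count Nat.Prime (n ^ 2 + 1) with hc
  have hqc : Nat.count Nat.Prime q < c := by
    have h1 : Nat.count Nat.Prime (q + 1) = Nat.count Nat.Prime q + 1 := by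
      rw [Nat.count_succ, if_pos hq]
    have h2 : Nat.count Nat.Prime (q + 1) ≤ c := Nat.count_monotone _ (by omega)
    omega
  have hMq : M < Nat.count Nat.Prime q := by
    have := Nat.nth_count (p := Nat.Prime) hq
    rw [← this] at hq1
    exact (Nat.nth_lt_nth hinf).mp hq1
  have hMc : M < c - 1 := by omega
  have hcm : c - 1 + 1 = c := by omega
  have hm1 : Nat.nth Nat.Prime (c - 1) ≤ n ^ 2 := by
    have := Nat.nth_lt_of_lt_count (p := Nat.Prime) (n := n ^ 2 + 1) (k := c - 1) (by omega)
    omega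
  have hm2 : n ^ 2 < Nat.nth Nat.Prime c := by
    by_contra hle
    push_neg at hle
    have h1 : Nat.count Nat.Prime (Nat.nth Nat.Prime c + 1) = c + 1 :=
      Nat.count_nth_succ_of_infinite hinf c
    have h2 : Nat.count Nat.Prime (Nat.nth Nat.Prime c + 1) ≤ c :=
      Nat.count_monotone _ (by omega)
    omega
  refine ⟨Nat.nth Nat.Prime c, Nat.prime_nth_prime c, hm2, ?_⟩
  have hA := h (c - 1) hMc
  rw [hcm] at hA
  have hs : Real.sqrt (Nat.nth Nat.Prime (c - 1)) ≤ n := by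
    have : (Nat.nth Nat.Prime (c - 1) : ℝ) ≤ (n : ℝ) ^ 2 := by exact_mod_cast hm1
    calc Real.sqrt (Nat.nth Nat.Prime (c - 1)) ≤ Real.sqrt ((n : ℝ) ^ 2) :=
          Real.sqrt_le_sqrt this
      _ = n := by rw [Real.sqrt_sq (by positivity)]
  have hlt : Real.sqrt (Nat.nth Nat.Prime c) < (n : ℝ) + 1 := by linarith
  have : (Nat.nth Nat.Prime c : ℝ) < ((n : ℝ) + 1) ^ 2 := by
    have := (Real.sqrt_lt' (x := (Nat.nth Nat.Prime c : ℝ)) (y := (n : ℝ) + 1)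
      (by positivity)).mp hlt
    linarith
  exact_mod_cast this
end

section
/- Suppose there exists a positive integer N such that for every integer n > N there are primes in both open intervals (n^2, (n + 1/2)^2) and ((n + 1/2)^2, (n+1)^2). Then there exists a positive integer M such that for every integer m > M, consecutive primes satisfy √(p_{m+1}) − √(p_m) < 1. -/
lemma nth_prime_succ_le {m q : ℕ} (hq : q.Prime) (hlt : Nat.nth Nat.Prime m < q) :
    Nat.nth Nat.Prime (m + 1) ≤ q := by
  have hinf : (setOf Nat.Prime).Infinite := Nat.infinite_setOf_prime
  have h1 : m + 1 ≤ Nat.count Nat.Prime q := by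
    calc m + 1 = Nat.count Nat.Prime (Nat.nth Nat.Prime m + 1) :=
          (Nat.count_nth_succ_of_infinite hinf m).symm
      _ ≤ Nat.count Nat.Prime q := Nat.count_monotone _ hlt
  calc Nat.nth Nat.Prime (m + 1) ≤ Nat.nth Nat.Prime (Nat.count Nat.Prime q) :=
        Nat.nth_monotone hinf h1
    _ = q := Nat.nth_count hq

theorem stmt_4
    (h : ∃ N : ℕ, 0 < N ∧ ∀ n : ℕ, n > N →
      (∃ p : ℕ, p.Prime ∧ (n : ℝ) ^ 2 < p ∧ (p : ℝ) < ((n : ℝ) + 1 / 2) ^ 2) ∧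
      (∃ q : ℕ, q.Prime ∧ ((n : ℝ) + 1 / 2) ^ 2 < q ∧ (q : ℝ) < ((n : ℝ) + 1) ^ 2)) :
    ∃ M : ℕ, 0 < M ∧ ∀ m : ℕ, m > M →
      Real.sqrt (Nat.nth Nat.Prime (m + 1)) - Real.sqrt (Nat.nth Nat.Prime m) < 1 := by
  obtain ⟨N, hN, hH⟩ := h
  have hinf : (setOf Nat.Prime).Infinite := Nat.infinite_setOf_prime
  refine ⟨(N + 1) ^ 2, by positivity, ?_⟩
  intro m hm
  set pm := Nat.nth Nat.Prime m with hpmdef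
  set pm1 := Nat.nth Nat.Prime (m + 1) with hpm1def
  have hpmp : pm.Prime := Nat.prime_nth_prime m
  have hsm : StrictMono (Nat.nth Nat.Prime) := fun a b hab => (Nat.nth_lt_nth hinf).2 hab
  have hmp : m ≤ pm := hsm.le_apply
  have hbig : (N + 1) ^ 2 < pm := lt_of_lt_of_le hm hmp
  set n := Nat.sqrt pm with hndef
  have hn2 : n ^ 2 ≤ pm := Nat.sqrt_le' pm
  have hlt2 : pm < (n + 1) ^ 2 := Nat.lt_succ_sqrt' pm
  have hnN : N < n := by
    have : N + 1 = Nat.sqrt ((N + 1) ^ 2) := by rw [Nat.sqrt_eq']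
    have h2 : N + 1 ≤ n := by
      rw [this]; exact Nat.sqrt_le_sqrt hbig.le
    omega
  -- real versions
  have hn2R : ((n : ℝ)) ^ 2 ≤ pm := by exact_mod_cast hn2
  have hlt2R : (pm : ℝ) < ((n : ℝ) + 1) ^ 2 := by exact_mod_cast hlt2
  have hne : 4 * pm ≠ (2 * n + 1) ^ 2 := by
    have hexp : (2 * n + 1) ^ 2 = 4 * (n * n + n) + 1 := by ring
    omega
  rcases lt_or_gt_of_ne hne with hcase | hcase
  · -- pm < (n + 1/2)^2
    have hpmhalf : (pm : ℝ) < ((n : ℝ) + 1 / 2) ^ 2 := by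
      have : (4 * pm : ℝ) < ((2 * (n : ℝ) + 1)) ^ 2 := by exact_mod_cast hcase
      nlinarith
    obtain ⟨q, hqp, hq1, hq2⟩ := (hH n hnN).2
    have hpmq : pm < q := by
      have : (pm : ℝ) < q := lt_trans hpmhalf hq1
      exact_mod_cast this
    have hle : pm1 ≤ q := nth_prime_succ_le hqp hpmq
    have hs1 : Real.sqrt pm1 ≤ Real.sqrt q := Real.sqrt_le_sqrt (by exact_mod_cast hle)
    have hs2 : Real.sqrt q < (n : ℝ) + 1 := by
      rw [Real.sqrt_lt' (by positivity)]; exact hq2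
    have hs3 : (n : ℝ) ≤ Real.sqrt pm := Real.le_sqrt_of_sq_le hn2R
    linarith
  · -- (n + 1/2)^2 < pm
    have hpmhalf : ((n : ℝ) + 1 / 2) ^ 2 < pm := by
      have : ((2 * (n : ℝ) + 1)) ^ 2 < (4 * pm : ℝ) := by exact_mod_cast hcase
      nlinarith
    obtain ⟨q, hqp, hq1, hq2⟩ := (hH (n + 1) (by omega)).1
    push_cast at hq1 hq2
    have hpmq : pm < q := by
      have : (pm : ℝ) < q := lt_trans hlt2R hq1
      exact_mod_cast this
    have hle : pm1 ≤ q := nth_prime_succ_le hqp hpmq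
    have hs1 : Real.sqrt pm1 ≤ Real.sqrt q := Real.sqrt_le_sqrt (by exact_mod_cast hle)
    have hs2 : Real.sqrt q < (n : ℝ) + 1 + 1 / 2 := by
      rw [Real.sqrt_lt' (by positivity)]; linarith
    have hs3 : (n : ℝ) + 1 / 2 ≤ Real.sqrt pm := Real.le_sqrt_of_sq_le hpmhalf.le
    linarith
end

section
/- Suppose there exists a positive integer M such that for every integer m > M, consecutive primes satisfy √(p_{m+1}) − √(p_m) < 1/2. Then for every integer n > p_M, both open intervals (n^2, (n + 1/2)^2) and ((n + 1/2)^2, (n+1)^2) contain a prime. -/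
open Nat in
lemma my_lt_count_of_nth_lt {p : ℕ → Prop} [DecidablePred p] (hp : (setOf p).Infinite)
    {k n : ℕ} (hlt : Nat.nth p k < n) : k < Nat.count p n := by
  have h1 := Nat.count_nth_succ_of_infinite hp k
  have h2 := Nat.count_monotone p (show Nat.nth p k + 1 ≤ n from hlt)
  omega

lemma my_prime_lt_count {k n : ℕ} (hlt : Nat.nth Nat.Prime k < n) :
    k < Nat.count Nat.Prime n :=
  my_lt_count_of_nth_lt Nat.infinite_setOf_prime hlt

lemma my_key (M : ℕ)
    (h : ∀ m : ℕ, m > M →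
      Real.sqrt (Nat.nth Nat.Prime (m + 1)) - Real.sqrt (Nat.nth Nat.Prime m) < 1 / 2)
    (K : ℕ) (hK : M + 2 ≤ Nat.count Nat.Prime (K + 1)) :
    ∃ p : ℕ, p.Prime ∧ K < p ∧ (p : ℝ) < (Real.sqrt K + 1 / 2) ^ 2 := by
  set i := Nat.count Nat.Prime (K + 1) with hi
  have hm : M < i - 1 := by omega
  have hsucc : (i - 1) + 1 = i := by omega
  have ha : Nat.nth Nat.Prime (i - 1) < K + 1 := Nat.nth_lt_of_lt_count (by omega)
  have hb : K < Nat.nth Nat.Prime i := by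
    by_contra hc
    push_neg at hc
    have := my_prime_lt_count (show Nat.nth Nat.Prime i < K + 1 by omega)
    omega
  refine ⟨Nat.nth Nat.Prime i, Nat.prime_nth_prime i, hb, ?_⟩
  have hh := h (i - 1) hm
  rw [hsucc] at hh
  have hs1 : Real.sqrt (Nat.nth Nat.Prime (i - 1)) ≤ Real.sqrt K :=
    Real.sqrt_le_sqrt (by exact_mod_cast Nat.lt_succ_iff.mp ha)
  have hs2 : Real.sqrt (Nat.nth Nat.Prime i) < Real.sqrt K + 1 / 2 := by linarith
  have hnn : (0:ℝ) ≤ Real.sqrt (Nat.nth Nat.Prime i) := Real.sqrt_nonneg _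
  calc ((Nat.nth Nat.Prime i : ℕ) : ℝ) = (Real.sqrt (Nat.nth Nat.Prime i)) ^ 2 := by
        rw [Real.sq_sqrt (by positivity)]
    _ < (Real.sqrt K + 1 / 2) ^ 2 := by
        apply pow_lt_pow_left₀ hs2 hnn (by norm_num)

theorem stmt_5 (M : ℕ) (hM : 0 < M)
    (h : ∀ m : ℕ, m > M →
      Real.sqrt (Nat.nth Nat.Prime (m + 1)) - Real.sqrt (Nat.nth Nat.Prime m) < 1 / 2) :
    ∀ n : ℕ, n > Nat.nth Nat.Prime M →
      (∃ p : ℕ, p.Prime ∧ (n : ℝ) ^ 2 < p ∧ (p : ℝ) < ((n : ℝ) + 1 / 2) ^ 2) ∧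
      (∃ q : ℕ, q.Prime ∧ ((n : ℝ) + 1 / 2) ^ 2 < q ∧ (q : ℝ) < ((n : ℝ) + 1) ^ 2) := by
  intro n hn
  set P := Nat.nth Nat.Prime M with hP
  have hP2 : 2 ≤ P := (Nat.prime_nth_prime M).two_le
  -- Bertrand: nth (M+1) ≤ 2 * P
  obtain ⟨q, hq, hq1, hq2⟩ := Nat.exists_prime_lt_and_le_two_mul P (by omega)
  have hcq : M + 2 ≤ Nat.count Nat.Prime (q + 1) := by
    have h1 : M + 1 ≤ Nat.count Nat.Prime q :=
      my_prime_lt_count hq1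
    have h2 : Nat.count Nat.Prime (q + 1) = Nat.count Nat.Prime q + 1 := by
      rw [Nat.count_succ, if_pos hq]
    omega
  have hnthM1 : Nat.nth Nat.Prime (M + 1) ≤ 2 * P := by
    have := Nat.nth_lt_of_lt_count (p := Nat.Prime) (show M + 1 < Nat.count Nat.Prime (q+1) by omega)
    omega
  have hle : 2 * P ≤ n ^ 2 := by nlinarith
  have hcount1 : M + 2 ≤ Nat.count Nat.Prime (n ^ 2 + 1) := by
    have : Nat.nth Nat.Prime (M + 1) < n ^ 2 + 1 := by omega
    have := my_prime_lt_count this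
    omega
  have hcount2 : M + 2 ≤ Nat.count Nat.Prime (n ^ 2 + n + 1) :=
    le_trans hcount1 (Nat.count_monotone _ (by omega))
  constructor
  · obtain ⟨p, hp, hp1, hp2⟩ := my_key M h (n ^ 2) hcount1
    refine ⟨p, hp, by exact_mod_cast hp1, ?_⟩
    have hsq : Real.sqrt ((n ^ 2 : ℕ) : ℝ) = (n : ℝ) := by
      push_cast
      exact Real.sqrt_sq (Nat.cast_nonneg n)
    rwa [hsq] at hp2
  · obtain ⟨p, hp, hp1, hp2⟩ := my_key M h (n ^ 2 + n) hcount2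
    have hlow : ((n : ℝ) + 1 / 2) ^ 2 < p := by
      have : (n : ℝ) ^ 2 + n + 1 ≤ p := by exact_mod_cast hp1
      nlinarith
    refine ⟨p, hp, hlow, ?_⟩
    have hsq : Real.sqrt ((n ^ 2 + n : ℕ) : ℝ) < (n : ℝ) + 1 / 2 := by
      rw [show ((n ^ 2 + n : ℕ) : ℝ) = (n:ℝ)^2 + n by push_cast; ring]
      rw [Real.sqrt_lt' (by positivity)]
      ring_nf
      nlinarith
    have : (Real.sqrt ((n ^ 2 + n : ℕ) : ℝ) + 1 / 2) ^ 2 < ((n : ℝ) + 1) ^ 2 := by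
      apply pow_lt_pow_left₀ (by linarith) (by positivity) (by norm_num)
    linarith
end

section
/- Fix δ with 0 < δ < 1. Suppose there exists a positive integer M with p_M > max(27(1 − δ)^3, 3/δ) such that for every integer m > M, consecutive primes satisfy p_{m+1}^{1/3} − p_m^{1/3} < 1 − δ. Then for every integer n > p_M, there is a prime p with n^3 < p < (n+1)^3. -/
theorem stmt_9 (δ : ℝ) (hδ0 : 0 < δ) (hδ1 : δ < 1) (M : ℕ) (hM : 0 < M)
    (hPM : (Nat.nth Nat.Prime M : ℝ) > max (27 * (1 - δ) ^ 3) (3 / δ))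
    (h : ∀ m : ℕ, m > M →
      (Nat.nth Nat.Prime (m + 1) : ℝ) ^ ((1 : ℝ) / 3) -
        (Nat.nth Nat.Prime m : ℝ) ^ ((1 : ℝ) / 3) < 1 - δ) :
    ∀ n : ℕ, n > Nat.nth Nat.Prime M →
      ∃ p : ℕ, p.Prime ∧ n ^ 3 < p ∧ p < (n + 1) ^ 3 := by
  intro n hn
  have hinf := Nat.infinite_setOf_prime
  set k := n ^ 3 with hk
  set c := Nat.count Nat.Prime (k + 1) with hc
  -- n ≥ 2
  have hpM2 : 2 ≤ Nat.nth Nat.Prime M :=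
    (Nat.nth_mem_of_infinite hinf M).two_le
  have hn2 : 2 ≤ n := by omega
  -- Bertrand: a prime q with n < q ≤ 2n
  obtain ⟨q, hq, hnq, hq2n⟩ := Nat.exists_prime_lt_and_le_two_mul n (by omega)
  have hqk : q ≤ k := by
    have : 2 * n ≤ n ^ 3 := by nlinarith [sq_nonneg n, hn2]
    omega
  -- nth (M+1) ≤ q
  have hMq : Nat.nth Nat.Prime M < q := by omega
  have hcountq : M < Nat.count Nat.Prime q := by
    rw [Nat.lt_nth_iff_count_lt hinf]
    exact lt_trans hn hnq
  have hnthM1 : Nat.nth Nat.Prime (M + 1) ≤ q := by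
    have := Nat.nth_monotone hinf hcountq
    rwa [Nat.nth_count hq] at this
  -- so count (k+1) ≥ M+2
  have hcM2 : M + 2 ≤ c := by
    have h1 : Nat.count Nat.Prime (Nat.nth Nat.Prime (M + 1) + 1) = M + 2 :=
      Nat.count_nth_succ_of_infinite hinf (M + 1)
    calc M + 2 = Nat.count Nat.Prime (Nat.nth Nat.Prime (M + 1) + 1) := h1.symm
    _ ≤ c := Nat.count_monotone _ (by omega)
  set m := c - 1 with hm
  have hmc : m + 1 = c := by omega
  have hmM : M < m := by omega
  -- p_m ≤ k
  have hpm : Nat.nth Nat.Prime m ≤ k := by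
    have := Nat.nth_lt_of_lt_count (p := Nat.Prime) (n := k + 1) (k := m) (by omega)
    omega
  -- p_{m+1} ≥ k+1
  have hpm1 : k + 1 ≤ Nat.nth Nat.Prime (m + 1) := by
    rw [hmc, hc]
    exact Nat.le_nth_count hinf (k + 1)
  refine ⟨Nat.nth Nat.Prime (m + 1), Nat.nth_mem_of_infinite hinf _, by omega, ?_⟩
  -- real analysis: p_{m+1} < (n+1)^3
  have hAnd := h m hmM
  have hcube : ((Nat.nth Nat.Prime m : ℝ)) ^ ((1:ℝ)/3) ≤ n := by
    have hle : (Nat.nth Nat.Prime m : ℝ) ≤ (n : ℝ) ^ (3:ℝ) := by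
      rw [show ((3:ℝ)) = ((3:ℕ):ℝ) by norm_num, Real.rpow_natCast]
      exact_mod_cast hpm
    calc ((Nat.nth Nat.Prime m : ℝ)) ^ ((1:ℝ)/3)
        ≤ ((n:ℝ) ^ (3:ℝ)) ^ ((1:ℝ)/3) :=
          Real.rpow_le_rpow (by positivity) hle (by norm_num)
      _ = n := by
          rw [← Real.rpow_mul (by positivity)]
          norm_num
  have hlt : ((Nat.nth Nat.Prime (m + 1) : ℝ)) ^ ((1:ℝ)/3) < (n : ℝ) + 1 := by
    have := hAnd
    nlinarith [hcube, hδ0]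
  have hfinal : (Nat.nth Nat.Prime (m + 1) : ℝ) < ((n : ℝ) + 1) ^ 3 := by
    have h0 : (0:ℝ) ≤ (Nat.nth Nat.Prime (m + 1) : ℝ) := by positivity
    calc (Nat.nth Nat.Prime (m + 1) : ℝ)
        = (((Nat.nth Nat.Prime (m + 1) : ℝ)) ^ ((1:ℝ)/3)) ^ (3:ℝ) := by
          rw [← Real.rpow_mul h0]; norm_num
      _ < ((n:ℝ) + 1) ^ (3:ℝ) := Real.rpow_lt_rpow (by positivity) hlt (by norm_num)
      _ = ((n:ℝ) + 1) ^ (3:ℕ) := by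
          rw [show ((3:ℝ)) = ((3:ℕ):ℝ) by norm_num, Real.rpow_natCast]
  exact_mod_cast (by push_cast; exact hfinal : ((Nat.nth Nat.Prime (m+1) : ℕ) : ℝ) < ((n:ℕ) + 1 : ℕ) ^ 3)
end

section
/- Let A and B be positive integers with √(p_A) > B. Suppose that for every integer n > A, p_n − p_{n−1} < B·√(p_n). Then for every real number x > p_A, the open interval (x − B·√x, x) contains a prime number. -/
theorem stmt_11 (A B : ℕ) (hA : 0 < A) (hB : 0 < B)
    (hPA : Real.sqrt (Nat.nth Nat.Prime A) > B)
    (h : ∀ n : ℕ, n > A →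
      (Nat.nth Nat.Prime n : ℝ) - Nat.nth Nat.Prime (n - 1) <
        B * Real.sqrt (Nat.nth Nat.Prime n)) :
    ∀ x : ℝ, x > (Nat.nth Nat.Prime A : ℝ) →
      ∃ q : ℕ, q.Prime ∧ x - B * Real.sqrt x < q ∧ (q : ℝ) < x := by
  intro x hx
  classical
  have hinf : (setOf Nat.Prime).Infinite := Nat.infinite_setOf_prime
  have hx0 : (0 : ℝ) ≤ x := le_trans (Nat.cast_nonneg _) hx.le
  have hex : ∃ m, x ≤ (Nat.nth Nat.Prime m : ℝ) := by
    refine ⟨⌈x⌉₊, (Nat.le_ceil x).trans ?_⟩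
    exact_mod_cast (Nat.nth_strictMono hinf).le_apply
  set k := Nat.find hex with hkdef
  have hk : x ≤ (Nat.nth Nat.Prime k : ℝ) := Nat.find_spec hex
  have hkA : A < k := by
    by_contra hle
    push_neg at hle
    have hmono : (Nat.nth Nat.Prime k : ℝ) ≤ Nat.nth Nat.Prime A := by
      exact_mod_cast (Nat.nth_strictMono hinf).monotone hle
    linarith
  have hk1 : k - 1 < k := Nat.sub_lt (Nat.lt_of_le_of_lt (Nat.zero_le _) hkA) one_pos
  have hprev : (Nat.nth Nat.Prime (k - 1) : ℝ) < x := by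
    have := Nat.find_min hex hk1
    push_neg at this
    exact this
  have hgap := h k hkA
  set s := Real.sqrt x with hs
  set t := Real.sqrt (Nat.nth Nat.Prime k) with ht
  have hs2 : s * s = x := Real.mul_self_sqrt hx0
  have ht2 : t * t = (Nat.nth Nat.Prime k : ℝ) := Real.mul_self_sqrt (Nat.cast_nonneg _)
  have hts : s ≤ t := Real.sqrt_le_sqrt hk
  have hsB : (B : ℝ) < s := lt_of_lt_of_le hPA (Real.sqrt_le_sqrt hx.le)
  refine ⟨Nat.nth Nat.Prime (k - 1), Nat.prime_nth_prime _, ?_, hprev⟩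
  nlinarith [hgap, hk, hts, hsB, hs2, ht2]
end

section
/- Let A and B be positive integers with B ≥ 4 and √(p_A) > B. Suppose that for every integer n > A, consecutive primes satisfy √(p_n) − √(p_{n−1}) < B/2. Then for every real number x > p_A, there is a prime p with (x−1)^3 < p < x^3. -/
theorem stmt_12 (A B : ℕ) (hA : 0 < A) (hB : 4 ≤ B)
    (hPA : Real.sqrt (Nat.nth Nat.Prime A) > B)
    (h : ∀ n : ℕ, n > A →
      Real.sqrt (Nat.nth Nat.Prime n) - Real.sqrt (Nat.nth Nat.Prime (n - 1)) < B / 2) :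
    ∀ x : ℝ, x > (Nat.nth Nat.Prime A : ℝ) →
      ∃ p : ℕ, p.Prime ∧ (x - 1) ^ 3 < p ∧ (p : ℝ) < x ^ 3 := by
  classical
  intro x hx
  set q : ℕ → ℕ := Nat.nth Nat.Prime with hqdef
  have hxpos : (0:ℝ) < x := lt_of_le_of_lt (Nat.cast_nonneg _) hx
  have hsx : (B:ℝ) < Real.sqrt x := by
    calc (B:ℝ) < Real.sqrt (q A) := hPA
    _ ≤ Real.sqrt x := Real.sqrt_le_sqrt hx.le
  have hsxx : Real.sqrt x * Real.sqrt x = x := Real.mul_self_sqrt hxpos.le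
  have hB4 : (4:ℝ) ≤ (B:ℝ) := by exact_mod_cast hB
  have hx16 : (16:ℝ) < x := by nlinarith
  have hspos : 0 < Real.sqrt x := lt_of_le_of_lt (by positivity) hsx
  have h1 : (B:ℝ) * (x * Real.sqrt x) < x * x := by
    have := mul_lt_mul_of_pos_right hsx (mul_pos hxpos hspos)
    nlinarith [this]
  have hxs2 : (x * Real.sqrt x)^2 = x^3 := by
    rw [mul_pow, Real.sq_sqrt hxpos.le]; ring
  have key : (x - 1)^3 < (x * Real.sqrt x - B / 2)^2 := by
    nlinarith [h1, hxs2, hx16, sq_nonneg (B:ℝ)]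
  -- find least n with x^3 ≤ q n
  have hmono : StrictMono q := Nat.nth_strictMono Nat.infinite_setOf_prime
  have hex : ∃ n : ℕ, x ^ 3 ≤ (q n : ℝ) := by
    refine ⟨⌈x ^ 3⌉₊, ?_⟩
    calc x ^ 3 ≤ (⌈x ^ 3⌉₊ : ℝ) := Nat.le_ceil _
    _ ≤ (q ⌈x ^ 3⌉₊ : ℝ) := by exact_mod_cast hmono.le_apply
  set n0 := Nat.find hex with hn0
  have hspec : x ^ 3 ≤ (q n0 : ℝ) := Nat.find_spec hex
  have hAn0 : A < n0 := by
    rw [hn0, Nat.lt_find_iff]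
    intro m hm
    push_neg
    have hle : (q m : ℝ) ≤ (q A : ℝ) := by exact_mod_cast hmono.monotone hm
    have hx3 : x < x ^ 3 := by nlinarith [mul_pos hxpos hxpos, sq_nonneg x]
    nlinarith
  have hn0pos : 0 < n0 := lt_of_le_of_lt (Nat.zero_le _) hAn0
  have hmlt : ¬ x ^ 3 ≤ (q (n0 - 1) : ℝ) := Nat.find_min hex (by omega)
  push_neg at hmlt
  clear_value n0
  clear hex hn0
  set m := n0 - 1 with hmdef
  have hdiff := h n0 hAn0
  -- √(q n0) ≥ x √x
  have hq0 : x * Real.sqrt x ≤ Real.sqrt (q n0) := by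
    rw [show x * Real.sqrt x = Real.sqrt (x^3) by
      rw [show x ^ 3 = (x * Real.sqrt x)^2 by ring_nf; nlinarith]
      exact (Real.sqrt_sq (by positivity)).symm]
    exact Real.sqrt_le_sqrt hspec
  have hqm : Real.sqrt (q m) > x * Real.sqrt x - B / 2 := by
    have := hdiff
    rw [← hmdef] at this
    linarith
  have hc : (0:ℝ) < x * Real.sqrt x - B / 2 := by
    have hs1 : Real.sqrt x ≤ x * Real.sqrt x :=
      le_mul_of_one_le_left hspos.le (by linarith)
    linarith
  have hqm2 : (q m : ℝ) > (x * Real.sqrt x - B / 2)^2 := by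
    have h1 : Real.sqrt (q m) * Real.sqrt (q m) = (q m : ℝ) :=
      Real.mul_self_sqrt (Nat.cast_nonneg _)
    rw [gt_iff_lt, pow_two, ← h1]
    exact mul_self_lt_mul_self hc.le hqm
  refine ⟨q m, Nat.prime_nth_prime m, ?_, hmlt⟩
  linarith
end

section
/- Suppose consecutive primes satisfy √(p_n) − √(p_{n−1}) = O(1), i.e., there exist constants A and C such that √(p_n) − √(p_{n−1}) < C for all n > A. Then there exists a positive integer M such that for every integer m > M, there is a prime p with m^3 < p < (m+1)^3. -/
theorem stmt_13
    (h : ∃ A : ℕ, ∃ C : ℝ, ∀ n : ℕ, n > A →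
      Real.sqrt (Nat.nth Nat.Prime n) - Real.sqrt (Nat.nth Nat.Prime (n - 1)) < C) :
    ∃ M : ℕ, 0 < M ∧ ∀ m : ℕ, m > M →
      ∃ p : ℕ, p.Prime ∧ m ^ 3 < p ∧ p < (m + 1) ^ 3 := by
  obtain ⟨A, C, h⟩ := h
  have hinf := Nat.infinite_setOf_prime
  -- C is positive
  have hC : 0 < C := by
    have h1 := h (A + 1) (Nat.lt_succ_self A)
    simp only [Nat.add_sub_cancel] at h1
    have hlt : Nat.nth Nat.Prime A < Nat.nth Nat.Prime (A + 1) :=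
      (Nat.nth_lt_nth hinf).2 (Nat.lt_succ_self A)
    have : Real.sqrt (Nat.nth Nat.Prime A) < Real.sqrt (Nat.nth Nat.Prime (A + 1)) :=
      Real.sqrt_lt_sqrt (by positivity) (by exact_mod_cast hlt)
    linarith
  refine ⟨max (Nat.nth Nat.Prime A) (⌈C ^ 2⌉₊ + 1), by positivity, fun m hm => ?_⟩
  set n := Nat.count Nat.Prime (m ^ 3 + 1) with hn
  have hmA : Nat.nth Nat.Prime A < m := lt_of_le_of_lt (le_max_left _ _) hm
  have hm1 : 1 ≤ m := by
    have := le_max_right (Nat.nth Nat.Prime A) (⌈C ^ 2⌉₊ + 1)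
    omega
  have hmC : C ^ 2 < (m : ℝ) := by
    have : ⌈C ^ 2⌉₊ < m := lt_of_le_of_lt (le_trans (Nat.le_succ _) (le_max_right _ _)) hm
    calc C ^ 2 ≤ (⌈C ^ 2⌉₊ : ℝ) := Nat.le_ceil _
      _ < (m : ℝ) := by exact_mod_cast this
  -- n > A
  have hAn : A < n := by
    rw [hn, Nat.lt_nth_iff_count_lt hinf]
    calc Nat.nth Nat.Prime A < m := hmA
      _ ≤ m ^ 3 := Nat.le_self_pow (by norm_num) m
      _ < m ^ 3 + 1 := Nat.lt_succ_self _
  -- bounds on nth primes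
  have hub : m ^ 3 + 1 ≤ Nat.nth Nat.Prime n :=
    (Nat.count_le_iff_le_nth hinf).1 le_rfl
  have hlb : Nat.nth Nat.Prime (n - 1) ≤ m ^ 3 := by
    have : Nat.nth Nat.Prime (n - 1) < m ^ 3 + 1 :=
      Nat.nth_lt_of_lt_count (Nat.sub_lt (by omega) one_pos)
    omega
  have hgap := h n hAn
  -- real analysis
  have hs : Real.sqrt m * Real.sqrt m = (m : ℝ) := Real.mul_self_sqrt (by positivity)
  have hs0 : 0 ≤ Real.sqrt m := Real.sqrt_nonneg _
  have hsqm : Real.sqrt ((m : ℝ) ^ 3) = m * Real.sqrt m := by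
    rw [pow_succ, Real.sqrt_mul (by positivity), Real.sqrt_sq (by positivity)]
  have hlow : Real.sqrt (Nat.nth Nat.Prime (n - 1)) ≤ m * Real.sqrt m := by
    rw [← hsqm]
    apply Real.sqrt_le_sqrt
    exact_mod_cast hlb
  have hkey : Real.sqrt (Nat.nth Nat.Prime n) < m * Real.sqrt m + C := by linarith
  have hnth : (Nat.nth Nat.Prime n : ℝ) < (m * Real.sqrt m + C) ^ 2 := by
    have := Real.sq_sqrt (show (0:ℝ) ≤ (Nat.nth Nat.Prime n : ℝ) by positivity)
    nlinarith [Real.sqrt_nonneg (Nat.nth Nat.Prime n : ℝ)]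
  have hfin : (m * Real.sqrt m + C) ^ 2 < ((m : ℝ) + 1) ^ 3 := by
    have h4 : (3 * Real.sqrt m - 2 * C) * (3 * Real.sqrt m + 2 * C) > 0 := by nlinarith
    have h5 : 3 * Real.sqrt m - 2 * C > 0 := by nlinarith
    nlinarith [mul_pos (mul_pos (show (0:ℝ) < m by exact_mod_cast hm1) (Real.sqrt_pos.2 (show (0:ℝ) < m by exact_mod_cast hm1))) h5,
      mul_nonneg (Nat.cast_nonneg m : (0:ℝ) ≤ m) hs0]
  refine ⟨Nat.nth Nat.Prime n, Nat.prime_nth_prime n, by omega, ?_⟩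
  have : (Nat.nth Nat.Prime n : ℝ) < ((m : ℝ) + 1) ^ 3 := lt_trans hnth hfin
  exact_mod_cast this
end

section
/- Let A and B be positive integers with B ≥ 4 and p_A^{1/4} > B. Suppose that for every integer n > A, consecutive primes satisfy √(p_n) − √(p_{n−1}) < B/2. Then for every real number x > p_A, there is a prime p with (x−1)^{5/2} < p < x^{5/2}. -/
set_option maxHeartbeats 1000000


theorem stmt_14 (A B : ℕ) (hA : 0 < A) (hB : 4 ≤ B)
    (hPA : (Nat.nth Nat.Prime A : ℝ) ^ ((1 : ℝ) / 4) > B)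
    (h : ∀ n : ℕ, n > A →
      Real.sqrt (Nat.nth Nat.Prime n) - Real.sqrt (Nat.nth Nat.Prime (n - 1)) < B / 2) :
    ∀ x : ℝ, x > (Nat.nth Nat.Prime A : ℝ) →
      ∃ p : ℕ, p.Prime ∧ (x - 1) ^ ((5 : ℝ) / 2) < p ∧ (p : ℝ) < x ^ ((5 : ℝ) / 2) := by
  classical
  intro x hx
  have hinf : {p : ℕ | Nat.Prime p}.Infinite := Nat.infinite_setOf_prime
  set pA : ℕ := Nat.nth Nat.Prime A with hpA_def
  have hpAnn : (0:ℝ) ≤ (pA:ℝ) := Nat.cast_nonneg _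
  have hB4 : (4:ℝ) ≤ (B:ℝ) := by exact_mod_cast hB
  -- pA > 256
  have hBpow : ((B:ℝ)) ^ (4:ℕ) < ((pA:ℝ) ^ ((1:ℝ)/4)) ^ (4:ℕ) :=
    pow_lt_pow_left₀ hPA (by positivity) (by norm_num)
  have hcollapse : ((pA:ℝ) ^ ((1:ℝ)/4)) ^ (4:ℕ) = (pA:ℝ) := by
    rw [← Real.rpow_natCast ((pA:ℝ) ^ ((1:ℝ)/4)) 4, ← Real.rpow_mul hpAnn]
    norm_num
  have h256 : (256:ℝ) < (pA:ℝ) := by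
    have h44 : ((4:ℝ))^(4:ℕ) ≤ (B:ℝ)^(4:ℕ) := pow_le_pow_left₀ (by norm_num) hB4 4
    have : (256:ℝ) ≤ (B:ℝ)^(4:ℕ) := by norm_num at h44 ⊢; linarith
    linarith [hcollapse ▸ hBpow]
  have hx256 : (256:ℝ) < x := lt_trans h256 hx
  have hx1 : (1:ℝ) ≤ x - 1 := by linarith
  have hx1nn : (0:ℝ) ≤ x - 1 := by linarith
  set y : ℝ := (x - 1) ^ ((5:ℝ)/2) with hy_def
  have hynn : 0 ≤ y := Real.rpow_nonneg hx1nn _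
  -- p_A ≤ y
  have hpAy : (pA:ℝ) ≤ y := by
    have h2n : (x-1)^(2:ℕ) ≤ y := by
      rw [← Real.rpow_natCast (x-1) 2, show ((2:ℕ):ℝ) = (2:ℝ) by norm_num, hy_def]
      exact Real.rpow_le_rpow_of_exponent_le hx1 (by norm_num)
    nlinarith [h2n, mul_pos (sub_pos.mpr hx) (show (0:ℝ) < x - 2 by linarith), hpAnn, hx256]
  -- existence of an index n with y < nth n
  have hex : ∃ n : ℕ, y < (Nat.nth Nat.Prime n : ℝ) := by
    refine ⟨⌈y⌉₊ + 1, ?_⟩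
    have h1 : y ≤ (⌈y⌉₊ : ℝ) := Nat.le_ceil y
    have h2 : (⌈y⌉₊ + 1 : ℕ) ≤ Nat.nth Nat.Prime (⌈y⌉₊ + 1) :=
      (Nat.nth_strictMono hinf).le_apply
    have h3 : ((⌈y⌉₊ + 1 : ℕ) : ℝ) ≤ (Nat.nth Nat.Prime (⌈y⌉₊ + 1) : ℝ) := by exact_mod_cast h2
    push_cast at h3
    linarith
  set n : ℕ := Nat.find hex with hn_def
  have hn : y < (Nat.nth Nat.Prime n : ℝ) := Nat.find_spec hex
  -- n > A
  have hAn : A < n := by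
    by_contra hle
    push_neg at hle
    have : Nat.nth Nat.Prime n ≤ pA := (Nat.nth_le_nth hinf).mpr hle
    have : (Nat.nth Nat.Prime n : ℝ) ≤ (pA:ℝ) := by exact_mod_cast this
    linarith
  have hn1 : n - 1 < n := Nat.sub_lt (lt_of_le_of_lt (Nat.zero_le A) hAn) one_pos
  have hq : (Nat.nth Nat.Prime (n-1) : ℝ) ≤ y := by
    have := Nat.find_min hex hn1
    push_neg at this
    exact this
  -- the gap hypothesis
  have hgap := h n hAn
  set p : ℕ := Nat.nth Nat.Prime n with hp_def
  set q : ℕ := Nat.nth Nat.Prime (n-1) with hq_def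
  -- sqrt q ≤ (x-1)^(5/4)
  have hsy : Real.sqrt y = (x-1) ^ ((5:ℝ)/4) := by
    rw [hy_def, Real.sqrt_eq_rpow, ← Real.rpow_mul hx1nn]
    norm_num
  have hsq : Real.sqrt (q:ℝ) ≤ (x-1) ^ ((5:ℝ)/4) := by
    rw [← hsy]; exact Real.sqrt_le_sqrt hq
  -- B/2 < (x-1)^(1/4)
  have hxq : (pA:ℝ) ^ ((1:ℝ)/4) < x ^ ((1:ℝ)/4) := Real.rpow_lt_rpow hpAnn hx (by norm_num)
  have hBx : (B:ℝ) < x ^ ((1:ℝ)/4) := lt_trans hPA hxq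
  have hx14 : x ^ ((1:ℝ)/4) ≤ 2 * (x-1) ^ ((1:ℝ)/4) := by
    have h16 : (16:ℝ) ^ ((1:ℝ)/4) = 2 := by
      rw [show (16:ℝ) = (2:ℝ)^(4:ℕ) by norm_num, ← Real.rpow_natCast (2:ℝ) 4,
        ← Real.rpow_mul (by norm_num)]
      norm_num
    have hm : (16 * (x-1)) ^ ((1:ℝ)/4) = 2 * (x-1) ^ ((1:ℝ)/4) := by
      rw [Real.mul_rpow (by norm_num) hx1nn, h16]
    rw [← hm]
    exact Real.rpow_le_rpow (by linarith) (by linarith) (by norm_num)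
  have hB2 : (B:ℝ)/2 < (x-1) ^ ((1:ℝ)/4) := by linarith
  -- sqrt p < x^(5/4)
  have hadd : (x-1) ^ ((5:ℝ)/4) + (x-1) ^ ((1:ℝ)/4) ≤ x ^ ((5:ℝ)/4) := by
    have h1 : (x-1) ^ ((5:ℝ)/4) = (x-1) * (x-1) ^ ((1:ℝ)/4) := by
      rw [show (5:ℝ)/4 = 1 + 1/4 by norm_num, Real.rpow_add (by linarith : (0:ℝ) < x-1),
        Real.rpow_one]
    have h2 : x ^ ((5:ℝ)/4) = x * x ^ ((1:ℝ)/4) := by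
      rw [show (5:ℝ)/4 = 1 + 1/4 by norm_num, Real.rpow_add (by linarith : (0:ℝ) < x),
        Real.rpow_one]
    have h3 : (x-1) ^ ((1:ℝ)/4) ≤ x ^ ((1:ℝ)/4) :=
      Real.rpow_le_rpow hx1nn (by linarith) (by norm_num)
    have hx0 : (0:ℝ) < x := by linarith
    calc (x-1) ^ ((5:ℝ)/4) + (x-1) ^ ((1:ℝ)/4)
        = x * (x-1) ^ ((1:ℝ)/4) := by rw [h1]; ring
      _ ≤ x * x ^ ((1:ℝ)/4) := by nlinarith
      _ = x ^ ((5:ℝ)/4) := h2.symm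
  have hsp : Real.sqrt (p:ℝ) < x ^ ((5:ℝ)/4) := by
    have := hgap
    calc Real.sqrt (p:ℝ) < Real.sqrt (q:ℝ) + (B:ℝ)/2 := by
          push_cast at hgap ⊢; linarith
      _ ≤ (x-1) ^ ((5:ℝ)/4) + (x-1) ^ ((1:ℝ)/4) := by linarith
      _ ≤ x ^ ((5:ℝ)/4) := hadd
  -- conclude p < x^(5/2)
  have hfinal : (p:ℝ) < x ^ ((5:ℝ)/2) := by
    have hpnn : (0:ℝ) ≤ (p:ℝ) := Nat.cast_nonneg _
    have h1 : (p:ℝ) = Real.sqrt (p:ℝ) ^ 2 := (Real.sq_sqrt hpnn).symm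
    have h2 : (x ^ ((5:ℝ)/4)) ^ (2:ℕ) = x ^ ((5:ℝ)/2) := by
      rw [← Real.rpow_natCast (x ^ ((5:ℝ)/4)) 2, ← Real.rpow_mul (by linarith)]
      norm_num
    rw [h1, ← h2]
    exact pow_lt_pow_left₀ hsp (Real.sqrt_nonneg _) (by norm_num)
  exact ⟨p, Nat.prime_nth_prime n, hn, hfinal⟩
end

section
/- Suppose there exists a positive integer A such that for every integer n > A, consecutive primes satisfy √(p_n) − √(p_{n−1}) < 1. Then for every real number x > p_A, there is a prime p with (x − 1.5·x^{1/4})^{3/2} < p < x^{3/2}. -/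
private lemma stmt_15_poly (w : ℝ) (hw : 2 ≤ w) : w * (w - 1.5)^3 < (w-1)^4 := by
  nlinarith [sq_nonneg (w - 1.25), sq_nonneg (2*w - 2.5), sq_nonneg w]

theorem stmt_15 (A : ℕ) (hA : 0 < A)
    (h : ∀ n : ℕ, n > A →
      Real.sqrt (Nat.nth Nat.Prime n) - Real.sqrt (Nat.nth Nat.Prime (n - 1)) < 1) :
    ∀ x : ℝ, x > (Nat.nth Nat.Prime A : ℝ) →
      ∃ p : ℕ, p.Prime ∧
        (x - 1.5 * x ^ ((1 : ℝ) / 4)) ^ ((3 : ℝ) / 2) < p ∧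
        (p : ℝ) < x ^ ((3 : ℝ) / 2) := by
  classical
  intro x hx
  have hmono : StrictMono (Nat.nth Nat.Prime) :=
    Nat.nth_strictMono Nat.infinite_setOf_prime
  have hp1 : Nat.nth Nat.Prime 1 = 3 := by
    have := Nat.nth_count (p := Nat.Prime) (n := 3) (by norm_num)
    simpa [Nat.count_succ] using this
  have hpA3 : 3 ≤ Nat.nth Nat.Prime A := by
    calc 3 = Nat.nth Nat.Prime 1 := hp1.symm
    _ ≤ Nat.nth Nat.Prime A := hmono.monotone hA
  have hx3 : (3:ℝ) < x := lt_of_le_of_lt (by exact_mod_cast hpA3) hx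
  have hx0 : (0:ℝ) < x := by linarith
  have hx1 : (1:ℝ) < x := by linarith
  set y := x ^ ((3:ℝ)/2) with hy
  have hxy : x < y := by
    have : x ^ (1:ℝ) < x ^ ((3:ℝ)/2) :=
      Real.rpow_lt_rpow_of_exponent_lt hx1 (by norm_num)
    simpa using this
  set P : ℕ → Prop := fun n => (Nat.nth Nat.Prime n : ℝ) < y with hP
  set B : ℕ := ⌈y⌉₊ with hB
  have hPA : P A := lt_trans hx hxy
  have hAB : A ≤ B := by
    have h1 : (A:ℝ) ≤ (Nat.nth Nat.Prime A : ℝ) := by exact_mod_cast hmono.le_apply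
    have h2 : (A:ℝ) ≤ (B:ℝ) := le_trans h1 (le_trans (le_of_lt hPA) (Nat.le_ceil y))
    exact_mod_cast h2
  set m : ℕ := Nat.findGreatest P B with hm
  have hPm : P m := Nat.findGreatest_spec hAB hPA
  have hAm : A ≤ m := Nat.le_findGreatest hAB hPA
  have hnotP : ¬ P (m+1) := by
    by_cases h' : m + 1 ≤ B
    · exact Nat.findGreatest_is_greatest (Nat.lt_succ_self m) h'
    · intro hc
      push_neg at h'
      have h1 : (m+1 : ℝ) ≤ (Nat.nth Nat.Prime (m+1) : ℝ) := by
        exact_mod_cast hmono.le_apply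
      have h2 : (B:ℝ) < (m+1:ℝ) := by exact_mod_cast h'
      have h3 : y ≤ (B:ℝ) := Nat.le_ceil y
      simp only [hP] at hc
      linarith
  have hyp : y ≤ (Nat.nth Nat.Prime (m+1) : ℝ) := not_lt.mp hnotP
  have hgap := h (m+1) (by omega)
  simp only [Nat.add_sub_cancel] at hgap
  have hsy : Real.sqrt y = x ^ ((3:ℝ)/4) := by
    rw [hy, Real.sqrt_eq_rpow, ← Real.rpow_mul hx0.le]
    norm_num
  have hs1 : x ^ ((3:ℝ)/4) ≤ Real.sqrt (Nat.nth Nat.Prime (m+1)) := by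
    rw [← hsy]; exact Real.sqrt_le_sqrt hyp
  have key : x ^ ((3:ℝ)/4) - 1 < Real.sqrt (Nat.nth Nat.Prime m) := by linarith
  -- t = x^(1/4)
  set t : ℝ := x ^ ((1:ℝ)/4) with ht
  have ht0 : (0:ℝ) < t := Real.rpow_pos_of_pos hx0 _
  have ht4 : t ^ (4:ℕ) = x := by
    rw [ht, ← Real.rpow_natCast (x ^ ((1:ℝ)/4)) 4, ← Real.rpow_mul hx0.le]
    norm_num
  have ht3 : t ^ (3:ℕ) = x ^ ((3:ℝ)/4) := by
    rw [ht, ← Real.rpow_natCast (x ^ ((1:ℝ)/4)) 3, ← Real.rpow_mul hx0.le]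
    norm_num
  have ht13 : (1.3:ℝ) < t := by
    by_contra hcon
    push_neg at hcon
    have : t ^ (4:ℕ) ≤ (1.3:ℝ) ^ (4:ℕ) := pow_le_pow_left₀ ht0.le hcon 4
    rw [ht4] at this
    norm_num at this
    linarith
  set w : ℝ := t ^ (3:ℕ) with hwdef
  have hw2 : (2:ℝ) < w := by
    have : (1.3:ℝ)^(3:ℕ) < t^(3:ℕ) := pow_lt_pow_left₀ ht13 (by norm_num) (by norm_num)
    rw [← hwdef] at this
    norm_num at this
    linarith
  have hc0 : (0:ℝ) < x ^ ((3:ℝ)/4) - 1 := by rw [← ht3]; linarith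
  have hpm : (x ^ ((3:ℝ)/4) - 1)^2 < (Nat.nth Nat.Prime m : ℝ) := by
    have hs := Real.sq_sqrt (show (0:ℝ) ≤ (Nat.nth Nat.Prime m : ℝ) by positivity)
    nlinarith [Real.sqrt_nonneg ((Nat.nth Nat.Prime m : ℝ))]
  refine ⟨Nat.nth Nat.Prime m, Nat.prime_nth_prime m, ?_, hPm⟩
  -- remains: (x - 1.5 * t) ^ (3/2 : ℝ) < nth m
  set b : ℝ := x - 1.5 * x ^ ((1:ℝ)/4) with hbdef
  have hbw : b = t * (w - 1.5) := by
    rw [hbdef, ← ht, hwdef, ← ht4]; ring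
  rcases le_or_gt b 0 with hb | hb
  · have hL : b ^ ((3:ℝ)/2) ≤ 0 := by
      rcases lt_or_eq_of_le hb with hb' | hb'
      · rw [Real.rpow_def_of_neg hb']
        have hcos : Real.cos ((3:ℝ)/2 * Real.pi) = 0 := by
          have : (3:ℝ)/2 * Real.pi = Real.pi + Real.pi/2 := by ring
          rw [this, Real.cos_add, Real.cos_pi, Real.sin_pi, Real.cos_pi_div_two]
          ring
        rw [hcos, mul_zero]
      · rw [hb', Real.zero_rpow (by norm_num)]
    have : (0:ℝ) < (Nat.nth Nat.Prime m : ℝ) := by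
      exact_mod_cast (Nat.prime_nth_prime m).pos
    linarith
  · have hL0 : 0 ≤ b ^ ((3:ℝ)/2) := Real.rpow_nonneg hb.le _
    have hLsq : (b ^ ((3:ℝ)/2)) ^ (2:ℕ) = b ^ (3:ℕ) := by
      rw [← Real.rpow_natCast (b ^ ((3:ℝ)/2)) 2, ← Real.rpow_mul hb.le,
        ← Real.rpow_natCast b 3]
      norm_num
    have hb3 : b ^ (3:ℕ) = w * (w - 1.5)^3 := by
      rw [hbw, hwdef]; ring
    have hpoly : w * (w - 1.5)^3 < (w - 1)^4 := stmt_15_poly w hw2.le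
    have hc2 : b ^ ((3:ℝ)/2) < (x ^ ((3:ℝ)/4) - 1)^2 := by
      apply lt_of_pow_lt_pow_left₀ 2 (sq_nonneg _)
      rw [hLsq, hb3]
      have : ((x ^ ((3:ℝ)/4) - 1)^2)^(2:ℕ) = (w - 1)^4 := by
        rw [← ht3]; ring
      rw [this]
      exact hpoly
    linarith
end

section
/- The following are equivalent: (1) there exists a constant C > 0 such that for every real x > C, the open interval (x, x + √x) contains a prime; (2) there exists a positive integer N such that for every integer n > N, the open interval (p_n, p_n + √(p_n)) contains a prime. -/
theorem stmt_16 :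
    (∃ C : ℝ, 0 < C ∧ ∀ x : ℝ, x > C →
      ∃ p : ℕ, p.Prime ∧ x < p ∧ (p : ℝ) < x + Real.sqrt x) ↔
    (∃ N : ℕ, 0 < N ∧ ∀ n : ℕ, n > N →
      ∃ p : ℕ, p.Prime ∧ (Nat.nth Nat.Prime n : ℝ) < p ∧
        (p : ℝ) < Nat.nth Nat.Prime n + Real.sqrt (Nat.nth Nat.Prime n)) := by
  have hinf : {n : ℕ | n.Prime}.Infinite := Nat.infinite_setOf_prime
  constructor
  · rintro ⟨C, hC, hx⟩
    refine ⟨⌈C⌉₊ + 1, Nat.succ_pos _, fun n hn => ?_⟩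
    have h1 : (n : ℝ) ≤ Nat.nth Nat.Prime n := by
      exact_mod_cast (Nat.nth_strictMono hinf).le_apply
    have h2 : C < n := by
      calc C ≤ ⌈C⌉₊ := Nat.le_ceil C
      _ < n := by exact_mod_cast Nat.lt_of_succ_lt hn
    exact hx _ (lt_of_lt_of_le h2 h1)
  · rintro ⟨N, hN, hp⟩
    have hprime : ∀ k, (Nat.nth Nat.Prime k).Prime := fun k =>
      Nat.nth_mem_of_infinite hinf k
    refine ⟨Nat.nth Nat.Prime (N + 1),
      by exact_mod_cast (hprime (N + 1)).pos, fun x hx => ?_⟩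
    have hxpos : (0 : ℝ) < x := lt_of_le_of_lt (Nat.cast_nonneg _) hx
    set m := ⌊x⌋₊ with hm
    have hPm : Nat.nth Nat.Prime (N + 1) ≤ m := Nat.le_floor hx.le
    set c := Nat.count Nat.Prime (m + 1) with hcdef
    have hNc : N + 1 < c := by
      rw [hcdef, Nat.lt_nth_iff_count_lt hinf]
      exact Nat.lt_succ_of_le hPm
    set k := c - 1 with hk
    have hkN : N < k := by omega
    have hkc : k < c := by omega
    have hkc1 : k + 1 = c := by omega
    have hnthk : Nat.nth Nat.Prime k ≤ m := by
      have := Nat.nth_lt_of_lt_count hkc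
      omega
    have hnthk1 : m + 1 ≤ Nat.nth Nat.Prime (k + 1) := by
      rw [← Nat.count_le_iff_le_nth hinf, ← hcdef, hkc1]
    obtain ⟨q, hq, h1, h2⟩ := hp k hkN
    have h1' : Nat.nth Nat.Prime k < q := by exact_mod_cast h1
    have hqm : m + 1 ≤ q := by
      have hqe : Nat.nth Nat.Prime (Nat.count Nat.Prime q) = q := Nat.nth_count hq
      have hkj : k < Nat.count Nat.Prime q := by
        rw [← Nat.nth_lt_nth hinf, hqe]; exact h1'
      calc m + 1 ≤ Nat.nth Nat.Prime (k + 1) := hnthk1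
        _ ≤ Nat.nth Nat.Prime (Nat.count Nat.Prime q) := Nat.nth_monotone hinf hkj
        _ = q := hqe
    refine ⟨q, hq, ?_, ?_⟩
    · calc x < (m : ℝ) + 1 := Nat.lt_floor_add_one x
        _ ≤ q := by exact_mod_cast hqm
    · have hle : (Nat.nth Nat.Prime k : ℝ) ≤ x :=
        le_trans (by exact_mod_cast hnthk) (Nat.floor_le hxpos.le)
      calc (q : ℝ) < Nat.nth Nat.Prime k + Real.sqrt (Nat.nth Nat.Prime k) := h2
        _ ≤ x + Real.sqrt x := add_le_add hle (Real.sqrt_le_sqrt hle)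
end

section
/- Suppose there exists a positive integer A such that for every integer n > A, consecutive primes satisfy p_{n+1} − p_n < √(p_{n+1}). Then there exists a constant C such that for every integer m > C, both open intervals (m^2, (m + 1/2)^2) and ((m + 1/2)^2, (m+1)^2) contain prime numbers. -/
open Nat

lemma stmt_17_key (A : ℕ)
    (h : ∀ n : ℕ, n > A →
      (Nat.nth Nat.Prime (n + 1) : ℝ) - Nat.nth Nat.Prime n <
        Real.sqrt (Nat.nth Nat.Prime (n + 1)))
    (N : ℕ) (hN : Nat.nth Nat.Prime (A + 1) < N) :
    ∃ q : ℕ, q.Prime ∧ N < q ∧ (q - N) * (q - N - 1) < N := by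
  have hinf : (setOf Nat.Prime).Infinite := Nat.infinite_setOf_prime
  set c := Nat.count Nat.Prime (N + 1) with hc
  have hc2 : A + 2 ≤ c := by
    have h1 : Nat.count Nat.Prime (Nat.nth Nat.Prime (A + 1) + 1) = A + 2 :=
      Nat.count_nth_succ_of_infinite hinf _
    have := Nat.count_monotone Nat.Prime (show Nat.nth Nat.Prime (A + 1) + 1 ≤ N + 1 by omega)
    omega
  obtain ⟨n, hn⟩ : ∃ n, c = n + 1 := ⟨c - 1, by omega⟩
  have hp_le : Nat.nth Nat.Prime n ≤ N := by
    have : Nat.nth Nat.Prime n < N + 1 := by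
      rw [← Nat.lt_nth_iff_count_lt hinf]
      omega
    omega
  have hq_gt : N < Nat.nth Nat.Prime (n + 1) := by
    by_contra hcon
    push_neg at hcon
    have : Nat.nth Nat.Prime (n + 1) < N + 1 := by omega
    rw [← Nat.lt_nth_iff_count_lt hinf] at this
    omega
  set q := Nat.nth Nat.Prime (n + 1) with hq
  refine ⟨q, Nat.prime_nth_prime _, hq_gt, ?_⟩
  have hgap := h n (by omega)
  set d := q - N with hd
  have hd1 : 1 ≤ d := by omega
  have hdlt : (d : ℝ) < Real.sqrt q := by
    have : (d : ℝ) ≤ (q : ℝ) - Nat.nth Nat.Prime n := by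
      have : (Nat.nth Nat.Prime n : ℝ) ≤ N := by exact_mod_cast hp_le
      have hq' : (N : ℝ) ≤ q := by exact_mod_cast hq_gt.le
      push_cast [hd, Nat.cast_sub hq_gt.le]
      linarith
    linarith
  have hsq : (d : ℝ) ^ 2 < (q : ℝ) := by
    have h0 : (0 : ℝ) ≤ (d : ℝ) := by positivity
    nlinarith [Real.sq_sqrt (show (0:ℝ) ≤ (q:ℝ) by positivity), Real.sqrt_nonneg (q:ℝ)]
  have hsqn : d * d < q := by
    have : (d : ℝ) * d < q := by nlinarith
    exact_mod_cast this
  have hqN : q = N + d := by omega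
  obtain ⟨e, he⟩ : ∃ e, d = e + 1 := ⟨d - 1, by omega⟩
  have hr : d * d = d * (d - 1) + d := by rw [he]; simp [Nat.add_sub_cancel]; ring
  linarith

theorem stmt_17 (A : ℕ) (hA : 0 < A)
    (h : ∀ n : ℕ, n > A →
      (Nat.nth Nat.Prime (n + 1) : ℝ) - Nat.nth Nat.Prime n <
        Real.sqrt (Nat.nth Nat.Prime (n + 1))) :
    ∃ C : ℕ, ∀ m : ℕ, m > C →
      (∃ p : ℕ, p.Prime ∧ (m : ℝ) ^ 2 < p ∧ (p : ℝ) < ((m : ℝ) + 1 / 2) ^ 2) ∧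
      (∃ q : ℕ, q.Prime ∧ ((m : ℝ) + 1 / 2) ^ 2 < q ∧ (q : ℝ) < ((m : ℝ) + 1) ^ 2) := by
  refine ⟨Nat.nth Nat.Prime (A + 1) + 1, fun m hm => ?_⟩
  have hm1 : 1 ≤ m := by omega
  have hmN : Nat.nth Nat.Prime (A + 1) < m * m := by nlinarith
  constructor
  · obtain ⟨p, hp, hlt, hprod⟩ := stmt_17_key A h (m * m) hmN
    set d := p - m * m with hd
    have hdle : d ≤ m := by
      by_contra hc
      push_neg at hc
      have h1 : (m + 1) * m ≤ d * (d - 1) := Nat.mul_le_mul (by omega) (by omega)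
      have h2 : (m + 1) * m = m * m + m := by ring
      linarith
    have hple : p ≤ m * m + m := by omega
    refine ⟨p, hp, ?_, ?_⟩
    · have : (m * m : ℝ) < p := by exact_mod_cast hlt
      nlinarith
    · have : (p : ℝ) ≤ m * m + m := by exact_mod_cast hple
      nlinarith
  · have hmN2 : Nat.nth Nat.Prime (A + 1) < m * m + m := by omega
    obtain ⟨p, hp, hlt, hprod⟩ := stmt_17_key A h (m * m + m) hmN2
    set d := p - (m * m + m) with hd
    have hdle : d ≤ m := by
      by_contra hc
      push_neg at hc
      have h1 : (m + 1) * m ≤ d * (d - 1) := Nat.mul_le_mul (by omega) (by omega)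
      have h2 : (m + 1) * m = m * m + m := by ring
      linarith
    have hple : p ≤ m * m + 2 * m := by omega
    refine ⟨p, hp, ?_, ?_⟩
    · have : (m * m + m + 1 : ℝ) ≤ p := by exact_mod_cast hlt
      nlinarith
    · have : (p : ℝ) ≤ m * m + 2 * m := by exact_mod_cast hple
      nlinarith
end

section
/- Let A and B be positive integers. Suppose that for every integer n > A, consecutive primes satisfy √(p_n) − √(p_{n−1}) < 1/(2B). Then for every integer m with m − 1 > p_A, m > B, and B dividing m, and for every integer s with 0 ≤ s ≤ 2B − 1, the open interval ((m − (s+1)/(2B))^2, (m − s/(2B))^2) contains a prime number. -/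
theorem stmt_18 (A B : ℕ) (hA : 0 < A) (hB : 0 < B)
    (h : ∀ n : ℕ, n > A →
      Real.sqrt (Nat.nth Nat.Prime n) - Real.sqrt (Nat.nth Nat.Prime (n - 1)) <
        1 / (2 * B)) :
    ∀ m : ℕ, m - 1 > Nat.nth Nat.Prime A → m > B → B ∣ m →
      ∀ s : ℕ, s ≤ 2 * B - 1 →
        ∃ p : ℕ, p.Prime ∧
          ((m : ℝ) - ((s : ℝ) + 1) / (2 * B)) ^ 2 < p ∧
          (p : ℝ) < ((m : ℝ) - (s : ℝ) / (2 * B)) ^ 2 := by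
  intro m hm1 hmB hBm s hs
  have hinf := Nat.infinite_setOf_prime
  have hB' : (0 : ℝ) < 2 * B := by positivity
  have hm2 : 2 ≤ m := by omega
  set L : ℝ := ((m : ℝ) - ((s : ℝ) + 1) / (2 * B)) ^ 2 with hLdef
  have hs1 : ((s : ℝ) + 1) / (2 * B) ≤ 1 := by
    rw [div_le_one hB']
    have : s + 1 ≤ 2 * B := by omega
    exact_mod_cast this
  have hbase : (1 : ℝ) ≤ (m : ℝ) - ((s : ℝ) + 1) / (2 * B) := by
    have : (2 : ℝ) ≤ m := by exact_mod_cast hm2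
    linarith
  have hLnonneg : (0 : ℝ) ≤ L := sq_nonneg _
  set N : ℕ := ⌊L⌋₊ with hNdef
  have hm1le : ((m - 1 : ℕ) : ℝ) = (m : ℝ) - 1 := by
    push_cast [Nat.cast_sub (by omega : 1 ≤ m)]; ring
  have hsqN : (m - 1) ^ 2 ≤ N := by
    apply Nat.le_floor
    push_cast [hm1le]
    have h1 : (m : ℝ) - 1 ≤ (m : ℝ) - ((s : ℝ) + 1) / (2 * B) := by
      have hpos : (0 : ℝ) < ((s : ℝ) + 1) / (2 * B) := by positivity
      linarith
    have h0 : (0 : ℝ) ≤ (m : ℝ) - 1 := by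
      have : (2 : ℝ) ≤ m := by exact_mod_cast hm2
      linarith
    exact pow_le_pow_left₀ h0 h1 2
  set n : ℕ := Nat.count Nat.Prime (N + 1) with hndef
  -- n > A
  have hAN : Nat.nth Nat.Prime A < N + 1 := by
    have : Nat.nth Nat.Prime A < m - 1 := hm1
    have h2 : m - 1 ≤ (m - 1) ^ 2 := Nat.le_self_pow (by norm_num) _
    omega
  have hAn : A < n := (Nat.lt_nth_iff_count_lt hinf).mpr hAN
  set q : ℕ := Nat.nth Nat.Prime n with hqdef
  have hq_prime : q.Prime := Nat.nth_mem_of_infinite hinf n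
  -- lower bound : N + 1 ≤ q
  have hNq : N + 1 ≤ q := by
    have : Nat.count Nat.Prime (N + 1) ≤ n := le_rfl
    exact (Nat.count_le_iff_le_nth hinf).mp this
  -- previous prime ≤ N
  have hprevN : Nat.nth Nat.Prime (n - 1) ≤ N := by
    have hlt : n - 1 < n := by omega
    exact Nat.lt_succ_iff.mp ((Nat.lt_nth_iff_count_lt hinf (a := n - 1) (b := N + 1)).mp hlt)
  -- the gap hypothesis
  have hgap := h n hAn
  -- sqrt computations
  have hsqrtL : Real.sqrt L = (m : ℝ) - ((s : ℝ) + 1) / (2 * B) :=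
    Real.sqrt_sq (by linarith)
  have hprevL : (Nat.nth Nat.Prime (n - 1) : ℝ) ≤ L := by
    calc (Nat.nth Nat.Prime (n - 1) : ℝ) ≤ (N : ℝ) := by exact_mod_cast hprevN
      _ ≤ L := Nat.floor_le hLnonneg
  have hsqrtprev : Real.sqrt (Nat.nth Nat.Prime (n - 1)) ≤ (m : ℝ) - ((s : ℝ) + 1) / (2 * B) := by
    rw [← hsqrtL]; exact Real.sqrt_le_sqrt hprevL
  have hsqrtq : Real.sqrt q < (m : ℝ) - (s : ℝ) / (2 * B) := by
    have : Real.sqrt q < Real.sqrt (Nat.nth Nat.Prime (n - 1)) + 1 / (2 * B) := by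
      have := h n hAn; linarith
    have hstep : ((m : ℝ) - ((s : ℝ) + 1) / (2 * B)) + 1 / (2 * B) = (m : ℝ) - (s : ℝ) / (2 * B) := by
      field_simp; ring
    linarith
  refine ⟨q, hq_prime, ?_, ?_⟩
  · -- L < q
    calc L < (N : ℝ) + 1 := Nat.lt_floor_add_one L
      _ ≤ q := by exact_mod_cast hNq
  · -- q < (m - s/(2B))^2
    have hpos : (0 : ℝ) < (m : ℝ) - (s : ℝ) / (2 * B) := by
      have h1 : (s : ℝ) / (2 * B) ≤ ((s : ℝ) + 1) / (2 * B) := by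
        gcongr
        linarith
      linarith
    exact (Real.sqrt_lt' hpos).mp hsqrtq
end

section
/- Suppose there exists a positive integer A such that for every integer n > A, consecutive primes satisfy √(p_n) − √(p_{n−1}) < 1/2. Then for every integer m with m − 1 > p_A and for s ∈ {0, 1}, the open interval ((m − (s+1)/2)^2, (m − s/2)^2) contains a prime number. -/
/-!
Let `p_{n+1}` be the first prime exceeding `x²`, so that `p_n ≤ x²`. When `p_A ≤ x²` the index `n + 1`
exceeds `A`, hence `√p_{n+1} < √p_n + 1/2 ≤ x + 1/2`, i.e. `p_{n+1} ∈ (x², (x + 1/2)²)`. Both halves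
of `((m-1)², m²)` have this shape, with `x = m - 1` and `x = m - 1/2`.
-/

open Nat

theorem StrictMono.exists_le_lt_apply_succ {f : ℕ → ℕ} (hf : StrictMono f) {y : ℝ}
    (hy : (f 0 : ℝ) ≤ y) : ∃ n, (f n : ℝ) ≤ y ∧ y < f (n + 1) := by
  classical
  have hex : ∃ n, y < f n := by
    obtain ⟨k, hk⟩ := exists_nat_gt y
    exact ⟨k, hk.trans_le (by exact_mod_cast hf.le_apply)⟩
  obtain ⟨n, hn⟩ : ∃ n, Nat.find hex = n + 1 :=
    Nat.exists_eq_succ_of_ne_zero fun h0 => (Nat.find_spec hex).not_ge (h0 ▸ hy)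
  exact ⟨n, not_lt.mp (Nat.find_min hex (by omega)), hn ▸ Nat.find_spec hex⟩

theorem exists_prime_mem_Ioo_sq_of_sqrt_nth_prime_sub_lt {A : ℕ} {δ : ℝ}
    (h : ∀ n > A, √(nth Nat.Prime n) - √(nth Nat.Prime (n - 1)) < δ) {x : ℝ} (hx : 0 ≤ x)
    (hAx : (nth Nat.Prime A : ℝ) ≤ x ^ 2) :
    ∃ p : ℕ, p.Prime ∧ x ^ 2 < p ∧ (p : ℝ) < (x + δ) ^ 2 := by
  have hmono := nth_strictMono infinite_setOfPred_prime
  have h0A : (nth Nat.Prime 0 : ℝ) ≤ nth Nat.Prime A := by exact_mod_cast hmono.monotone A.zero_le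
  obtain ⟨n, hle, hlt⟩ := hmono.exists_le_lt_apply_succ (h0A.trans hAx)
  have hAn : A < n + 1 := hmono.lt_iff_lt.mp (by exact_mod_cast hAx.trans_lt hlt)
  have hsqrt : √(nth Nat.Prime (n + 1)) < x + δ :=
    calc √(nth Nat.Prime (n + 1)) < √(nth Nat.Prime n) + δ := by
          simpa [sub_lt_iff_lt_add'] using h (n + 1) hAn
      _ ≤ √(x ^ 2) + δ := by gcongr
      _ = x + δ := by rw [Real.sqrt_sq hx]
  exact ⟨_, prime_nth_prime _, hlt,
    (Real.sqrt_lt' ((Real.sqrt_nonneg _).trans_lt hsqrt)).mp hsqrt⟩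

theorem stmt_19_general (A : ℕ)
    (h : ∀ n : ℕ, n > A →
      Real.sqrt (Nat.nth Nat.Prime n) - Real.sqrt (Nat.nth Nat.Prime (n - 1)) < 1 / 2) :
    ∀ m : ℕ, m - 1 > Nat.nth Nat.Prime A →
      ∀ s : ℕ, s ≤ 1 →
        ∃ p : ℕ, p.Prime ∧
          ((m : ℝ) - ((s : ℝ) + 1) / 2) ^ 2 < p ∧
          (p : ℝ) < ((m : ℝ) - (s : ℝ) / 2) ^ 2 := by
  intro m hm s hs
  have hmA : (nth Nat.Prime A : ℝ) + 2 ≤ m := by exact_mod_cast (by omega : nth Nat.Prime A + 2 ≤ m)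
  have hs1 : (s : ℝ) ≤ 1 := by exact_mod_cast hs
  set x : ℝ := m - ((s : ℝ) + 1) / 2 with hx_def
  have hx : (nth Nat.Prime A : ℝ) + 1 ≤ x := by rw [hx_def]; linarith
  have hx0 : 0 ≤ x := by linarith [(nth Nat.Prime A).cast_nonneg (α := ℝ)]
  have hAx : (nth Nat.Prime A : ℝ) ≤ x ^ 2 := by nlinarith
  have hxδ : (m : ℝ) - (s : ℝ) / 2 = x + 1 / 2 := by ring
  simpa [hxδ] using exists_prime_mem_Ioo_sq_of_sqrt_nth_prime_sub_lt h hx0 hAx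

theorem stmt_19 (A : ℕ) (hA : 0 < A)
    (h : ∀ n : ℕ, n > A →
      Real.sqrt (Nat.nth Nat.Prime n) - Real.sqrt (Nat.nth Nat.Prime (n - 1)) < 1 / 2) :
    ∀ m : ℕ, m - 1 > Nat.nth Nat.Prime A →
      ∀ s : ℕ, s ≤ 1 →
        ∃ p : ℕ, p.Prime ∧
          ((m : ℝ) - ((s : ℝ) + 1) / 2) ^ 2 < p ∧
          (p : ℝ) < ((m : ℝ) - (s : ℝ) / 2) ^ 2 :=
  stmt_19_general A h
end
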